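/- arXiv:1204.5922 — 2 statements merged into one kernel-verified Lean document; each statement's English description precedes it below -/
import Mathlib

section
/- Let (G, ≤) be a lefthanded graph and let S ⊆ V be down-closed. Then the sets D̄_w for w ∈ μ(S) partition S, and there are no edges of G between distinct such sets. -/
open scoped Classical

/-- A tree order: whenever `w < u` and `w < v`, the elements `u` and `v` are comparable. -/
def TreeOrder (V : Type*) [PartialOrder V] : Prop :=
  ∀ w u v : V, w < u → w < v → (u ≤ v ∨ v ≤ u)

/-- A lefthanded graph with respect to the partial order on `V`. -/
def Lefthanded {V : Type*} [PartialOrder V] (G : SimpleGraph V) : Prop :=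
  TreeOrder V ∧
  (∀ u v : V, G.Adj u v → u ≤ v ∨ v ≤ u) ∧
  (∀ w u v : V, w < u → u < v → G.Adj v w → G.Adj v u)

/-- `D_v = {u : u < v}`. -/
noncomputable def Dset {V : Type*} [Fintype V] [PartialOrder V] (v : V) : Finset V :=
  Finset.univ.filter (fun u => u < v)

/-- `D̄_v = D_v ∪ {v}`. -/
noncomputable def Dbar {V : Type*} [Fintype V] [DecidableEq V] [PartialOrder V] (v : V) :
    Finset V :=
  insert v (Dset v)

/-- `N_v = {u < v : u ~ v}`. -/
noncomputable def Nset {V : Type*} [Fintype V] [PartialOrder V] (G : SimpleGraph V) (v : V) :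
    Finset V :=
  Finset.univ.filter (fun u => u < v ∧ G.Adj u v)

/-- `F_v = D_v \ N_v`. -/
noncomputable def Fset {V : Type*} [Fintype V] [DecidableEq V] [PartialOrder V]
    (G : SimpleGraph V) (v : V) : Finset V :=
  Dset v \ Nset G v

/-- `μ(U)`: the set of maximal elements of `U`. -/
noncomputable def maxElts {V : Type*} [PartialOrder V] (U : Finset V) : Finset V :=
  U.filter (fun u => ∀ w ∈ U, ¬ u < w)

/-- `I` is an independent set of `G`. -/
def IndepSet {V : Type*} (G : SimpleGraph V) (I : Finset V) : Prop :=
  ∀ u ∈ I, ∀ w ∈ I, ¬ G.Adj u w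

/-- `B(S) = Σ_{I ⊆ S, I independent} (−1)^{|I|} Π_{v∈I} p_v`. -/
noncomputable def Bfun {V : Type*} [Fintype V] (G : SimpleGraph V) (p : V → ℝ) (S : Finset V) :
    ℝ :=
  ∑ I ∈ S.powerset.filter (fun I => IndepSet G I), (-1 : ℝ) ^ I.card * ∏ v ∈ I, p v

/-- `𝔮(S) = Σ_{I ⊇ S, I independent} (−1)^{|I|−|S|} Π_{v∈I} p_v`. -/
noncomputable def qfun {V : Type*} [Fintype V] (G : SimpleGraph V) (p : V → ℝ) (S : Finset V) :
    ℝ :=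
  ∑ I ∈ Finset.univ.powerset.filter (fun I => IndepSet G I ∧ S ⊆ I),
    (-1 : ℝ) ^ (I.card - S.card) * ∏ v ∈ I, p v

/-- A down-closed set. -/
def DownClosed {V : Type*} [Fintype V] [PartialOrder V] (S : Finset V) : Prop :=
  ∀ s ∈ S, Dset s ⊆ S

/-!
In a tree order two elements with a common lower bound are comparable, so distinct maximal
elements of `S` have no common lower bound. Every element of `S` lies below a maximal one, and
an edge joins comparable vertices, so its lower endpoint would be a common lower bound of the
two maximal elements above its endpoints.
-/

lemma mem_Dbar {V : Type*} [Fintype V] [DecidableEq V] [PartialOrder V] {a w : V} :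
    a ∈ Dbar w ↔ a ≤ w := by
  simp [Dbar, Dset, le_iff_lt_or_eq, or_comm]

lemma mem_maxElts {V : Type*} [PartialOrder V] {S : Finset V} {w : V} :
    w ∈ maxElts S ↔ w ∈ S ∧ ∀ u ∈ S, ¬ w < u := by
  simp [maxElts]

lemma eq_of_le_of_mem_maxElts {V : Type*} [PartialOrder V] {S : Finset V} {w w' : V}
    (hw : w ∈ maxElts S) (hw' : w' ∈ maxElts S) (h : w ≤ w') : w = w' :=
  h.eq_or_lt.resolve_right ((mem_maxElts.1 hw).2 w' (mem_maxElts.1 hw').1)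

lemma exists_mem_maxElts_le {V : Type*} [PartialOrder V] {S : Finset V} {s : V} (hs : s ∈ S) :
    ∃ w ∈ maxElts S, s ≤ w := by
  obtain ⟨w, hsw, hw⟩ := S.exists_le_maximal hs
  exact ⟨w, mem_maxElts.2 ⟨hw.prop, fun u hu hwu => hw.not_gt hu hwu⟩, hsw⟩

lemma TreeOrder.le_total_of_le {V : Type*} [PartialOrder V] (hT : TreeOrder V) {a u v : V}
    (hu : a ≤ u) (hv : a ≤ v) : u ≤ v ∨ v ≤ u := by
  rcases hu.lt_or_eq with hu | rfl
  · rcases hv.lt_or_eq with hv | rfl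
    · exact hT a u v hu hv
    · exact Or.inr hu.le
  · exact Or.inl hv

lemma TreeOrder.eq_of_le_of_le_of_mem_maxElts {V : Type*} [PartialOrder V] (hT : TreeOrder V)
    {S : Finset V} {a w w' : V} (hw : w ∈ maxElts S) (hw' : w' ∈ maxElts S)
    (ha : a ≤ w) (ha' : a ≤ w') : w = w' :=
  (hT.le_total_of_le ha ha').elim (eq_of_le_of_mem_maxElts hw hw')
    fun h => (eq_of_le_of_mem_maxElts hw' hw h).symm

lemma DownClosed.Dbar_subset {V : Type*} [Fintype V] [DecidableEq V] [PartialOrder V]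
    {S : Finset V} (hS : DownClosed S) {s : V} (hs : s ∈ S) : Dbar s ⊆ S :=
  Finset.insert_subset hs (hS s hs)

lemma DownClosed.biUnion_maxElts_Dbar {V : Type*} [Fintype V] [DecidableEq V] [PartialOrder V]
    {S : Finset V} (hS : DownClosed S) : (maxElts S).biUnion (fun w => Dbar w) = S := by
  refine subset_antisymm (Finset.biUnion_subset.2 fun w hw => ?_) fun s hs => ?_
  · exact hS.Dbar_subset (mem_maxElts.1 hw).1
  · obtain ⟨w, hw, hsw⟩ := exists_mem_maxElts_le hs
    exact Finset.mem_biUnion.2 ⟨w, hw, mem_Dbar.2 hsw⟩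

theorem stmt2 {V : Type*} [Fintype V] [DecidableEq V] [PartialOrder V]
    (G : SimpleGraph V) (hG : Lefthanded G) (S : Finset V) (hS : DownClosed S) :
    ((maxElts S).biUnion (fun w => Dbar w) = S) ∧
    (∀ w ∈ maxElts S, ∀ w' ∈ maxElts S, w ≠ w' → Disjoint (Dbar w) (Dbar w')) ∧
    (∀ w ∈ maxElts S, ∀ w' ∈ maxElts S, w ≠ w' →
        ∀ a ∈ Dbar w, ∀ b ∈ Dbar w', ¬ G.Adj a b) := by
  obtain ⟨hT, hcomp, -⟩ := hG
  refine ⟨hS.biUnion_maxElts_Dbar, fun w hw w' hw' hne => ?_,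
    fun w hw w' hw' hne a ha b hb hab => hne ?_⟩
  · exact Finset.disjoint_left.2 fun a ha ha' =>
      hne (hT.eq_of_le_of_le_of_mem_maxElts hw hw' (mem_Dbar.1 ha) (mem_Dbar.1 ha'))
  · rw [mem_Dbar] at ha hb
    rcases hcomp a b hab with h | h
    · exact hT.eq_of_le_of_le_of_mem_maxElts hw hw' ha (h.trans hb)
    · exact hT.eq_of_le_of_le_of_mem_maxElts hw hw' (h.trans ha) hb
end

section
/- Let (G, ≤) be a lefthanded graph with labels p_v ∈ [0,1]. For every vertex v, B(D_v) − p_v · B(F_v) = B(D̄_v). Consequently, if 𝔮(S) ≥ 0 for all S ⊆ V, then B(D_v) ≥ p_v · B(F_v). -/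
open scoped Classical

/-!
Splitting the independent subsets of `D̄_v` according to whether they contain `v` gives the
recursion, since `insert v I` is independent iff `I` is and no vertex of `I` is adjacent to `v`;
inside `D_v` this means `I ⊆ F_v`. For the inequality, Möbius inversion on the Boolean lattice
writes `B(S)` as the sum of `𝔮(J)` over `J` disjoint from `S`, so `B(D̄_v) ≥ 0`.
-/

open Finset

lemma sum_powerset_neg_one_pow_card_eq_ite {α R : Type*} [DecidableEq α] [Ring R]
    (s : Finset α) : ∑ t ∈ s.powerset, (-1 : R) ^ #t = if s = ∅ then 1 else 0 := by
  exact_mod_cast congrArg (Int.cast : ℤ → R) (sum_powerset_neg_one_pow_card (x := s))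

lemma neg_one_pow_card_sub_of_subset {α R : Type*} [Ring R] {s t : Finset α} (h : s ⊆ t) :
    (-1 : R) ^ (#t - #s) = (-1) ^ #t * (-1) ^ #s := by
  rw [← pow_add, neg_one_pow_eq_pow_mod_two, neg_one_pow_eq_pow_mod_two (n := #t + #s)]
  congr 1
  have := card_le_card h
  omega

lemma sum_powerset_filter_subset_neg_one_pow {α R : Type*} [DecidableEq α] [Ring R]
    (s t : Finset α) :
    ∑ u ∈ s.powerset with u ⊆ t, (-1 : R) ^ (#t - #u) = if Disjoint s t then (-1) ^ #t else 0 := by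
  have hfilter : {u ∈ s.powerset | u ⊆ t} = (s ∩ t).powerset := by
    ext u; simp only [mem_filter, mem_powerset, subset_inter_iff]
  rw [hfilter, sum_congr rfl fun u hu =>
    neg_one_pow_card_sub_of_subset ((mem_powerset.1 hu).trans inter_subset_right),
    ← mul_sum, sum_powerset_neg_one_pow_card_eq_ite]
  simp [disjoint_iff_inter_eq_empty]

lemma Bfun_eq_sum_qfun {V : Type*} [Fintype V] [DecidableEq V] (G : SimpleGraph V)
    (p : V → ℝ) (S : Finset V) :
    Bfun G p S = ∑ J ∈ Sᶜ.powerset, qfun G p J := by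
  unfold Bfun qfun
  rw [sum_comm' (t' := univ.powerset.filter (IndepSet G))
    (s' := fun I => Sᶜ.powerset.filter (· ⊆ I)) (fun J I => by simp; tauto)]
  simp_rw [← sum_mul, sum_powerset_filter_subset_neg_one_pow, disjoint_compl_left_iff,
    ite_mul, zero_mul, ← sum_filter]
  congr 1
  ext I; simp [and_comm]

lemma indepSet_insert_iff {V : Type*} [DecidableEq V] (G : SimpleGraph V) (v : V)
    (I : Finset V) : IndepSet G (insert v I) ↔ IndepSet G I ∧ ∀ u ∈ I, ¬ G.Adj u v := by
  simp only [IndepSet, mem_insert, forall_eq_or_imp, G.irrefl, not_false_eq_true, true_and]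
  constructor
  · rintro ⟨hv, hI⟩
    exact ⟨fun u hu => (hI u hu).2, fun u hu huv => hv u hu huv.symm⟩
  · rintro ⟨hI, hv⟩
    exact ⟨fun u hu huv => hv u hu huv.symm, fun u hu => ⟨hv u hu, hI u hu⟩⟩

lemma Bfun_insert {V : Type*} [Fintype V] [DecidableEq V] (G : SimpleGraph V) (p : V → ℝ)
    {v : V} {S : Finset V} (hv : v ∉ S) :
    Bfun G p (insert v S) = Bfun G p S - p v * Bfun G p (S.filter (¬ G.Adj · v)) := by
  unfold Bfun
  rw [sum_filter, sum_powerset_insert hv, ← sum_filter, sub_eq_add_neg, neg_mul_eq_neg_mul,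
    mul_sum]
  congr 1
  have hfilter : {I ∈ (S.filter (¬ G.Adj · v)).powerset | IndepSet G I}
      = {I ∈ S.powerset | IndepSet G I ∧ ∀ u ∈ I, ¬ G.Adj u v} := by
    ext I; simp only [mem_filter, mem_powerset, subset_iff]; grind
  rw [hfilter, sum_filter]
  refine sum_congr rfl fun I hI => ?_
  have hvI : v ∉ I := fun h => hv (mem_powerset.1 hI h)
  rw [indepSet_insert_iff, card_insert_of_notMem hvI, prod_insert hvI, pow_succ]
  split_ifs <;> ring

lemma Fset_eq_filter {V : Type*} [Fintype V] [DecidableEq V] [PartialOrder V]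
    (G : SimpleGraph V) (v : V) : Fset G v = (Dset v).filter (¬ G.Adj · v) := by
  ext u; simp +contextual [Fset, Nset, Dset]

theorem stmt7_general {V : Type*} [Fintype V] [DecidableEq V] [PartialOrder V]
    (G : SimpleGraph V) (p : V → ℝ) (v : V) :
    Bfun G p (Dset v) - p v * Bfun G p (Fset G v) = Bfun G p (Dbar v) ∧
    ((∀ S : Finset V, 0 ≤ qfun G p S) →
      p v * Bfun G p (Fset G v) ≤ Bfun G p (Dset v)) := by
  have hrec : Bfun G p (Dbar v) = Bfun G p (Dset v) - p v * Bfun G p (Fset G v) := by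
    rw [Dbar, Bfun_insert G p (by simp [Dset]), Fset_eq_filter]
  refine ⟨hrec.symm, fun hq => ?_⟩
  have hDbar : 0 ≤ Bfun G p (Dbar v) := by
    rw [Bfun_eq_sum_qfun]
    exact sum_nonneg fun J _ => hq J
  linarith

theorem stmt7 {V : Type*} [Fintype V] [DecidableEq V] [PartialOrder V]
    (G : SimpleGraph V) (p : V → ℝ) (hp : ∀ v, 0 ≤ p v ∧ p v ≤ 1)
    (hG : Lefthanded G) (v : V) :
    Bfun G p (Dset v) - p v * Bfun G p (Fset G v) = Bfun G p (Dbar v) ∧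
    ((∀ S : Finset V, 0 ≤ qfun G p S) →
      p v * Bfun G p (Fset G v) ≤ Bfun G p (Dset v)) :=
  stmt7_general G p v
end
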